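/- arXiv:1503.03016 — 2 statements merged into one kernel-verified Lean document; each statement's English description precedes it below -/
import Mathlib

section
/- Let X = {x_0,…,x_10} ⊂ ℤ² with x_0=(2,0), x_1=(1,1), x_2=(0,2), x_3=(−1,2), x_4=(−2,1), x_5=(−2,0), x_6=(−2,−1), x_7=(−1,−2), x_8=(0,−2), x_9=(1,−1), x_10=(0,0), and let Y = X \ {x_0}, both with c_2-adjacency. Then for any x ∈ X and y ∈ Y, the pointed digital images (X,x) and (Y,y) are not pointed (c_2,c_2)-homotopy equivalent. -/
/-- 2-adjacency (c₁-adjacency) on the natural numbers / digital intervals. -/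
def natAdj (a b : ℕ) : Prop := b = a + 1 ∨ a = b + 1

/-- Digital `(κ,μ)`-continuity of a function between digital images. -/
def DigCont {X Y : Type*} (κ : X → X → Prop) (μ : Y → Y → Prop) (f : X → Y) : Prop :=
  ∀ a b, κ a b → f a = f b ∨ μ (f a) (f b)

/-- `H : X × [0,m]_ℤ → Y` is a digital `(κ,μ)`-homotopy from `f` to `g`. -/
def IsHomotopy {X Y : Type*} (κ : X → X → Prop) (μ : Y → Y → Prop)
    (f g : X → Y) (m : ℕ) (H : X → ℕ → Y) : Prop :=
  (∀ x, H x 0 = f x) ∧ (∀ x, H x m = g x) ∧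
  (∀ x s t, s ≤ m → t ≤ m → natAdj s t → H x s = H x t ∨ μ (H x s) (H x t)) ∧
  (∀ t, t ≤ m → DigCont κ μ (fun x => H x t))

/-- `f` and `g` are digitally `(κ,μ)`-homotopic. -/
def Homotopic {X Y : Type*} (κ : X → X → Prop) (μ : Y → Y → Prop) (f g : X → Y) : Prop :=
  ∃ m H, IsHomotopy κ μ f g m H

/-- `c₂`-adjacency on `ℤ²`. -/
def c2Adj (p q : ℤ × ℤ) : Prop := p ≠ q ∧ |p.1 - q.1| ≤ 1 ∧ |p.2 - q.2| ≤ 1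

/-- The points `x_0, …, x_10` of the example (all `n ≥ 10` give `x_10 = (0,0)`). -/
def xpt : ℕ → ℤ × ℤ
  | 0 => (2, 0)
  | 1 => (1, 1)
  | 2 => (0, 2)
  | 3 => (-1, 2)
  | 4 => (-2, 1)
  | 5 => (-2, 0)
  | 6 => (-2, -1)
  | 7 => (-1, -2)
  | 8 => (0, -2)
  | 9 => (1, -1)
  | _ => (0, 0)

/-- `X = {x_0, …, x_10}`. -/
def Xset : Set (ℤ × ℤ) := Set.range xpt

/-- `Y = X \ {x_0}`. -/
def Yset : Set (ℤ × ℤ) := Xset \ {xpt 0}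

/-- The `c₂`-adjacency induced on a subset of `ℤ²`. -/
def subAdj (S : Set (ℤ × ℤ)) (a b : ↥S) : Prop := c2Adj a.1 b.1

/-- A pointed `(κ,κ)`-homotopy between self-maps: a homotopy holding `x₀` fixed. -/
def PtHomotopic {A : Type*} (κ : A → A → Prop) (x₀ : A) (f g : A → A) : Prop :=
  ∃ m H, IsHomotopy κ κ f g m H ∧ ∀ t, t ≤ m → H x₀ t = H x₀ 0

instance instC2Dec (p q : ℤ × ℤ) : Decidable (c2Adj p q) := by
  unfold c2Adj; infer_instance

def A11 (i j : Fin 11) : Prop := c2Adj (xpt i) (xpt j)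

instance (i j : Fin 11) : Decidable (A11 i j) := instC2Dec _ _

def adjC (a b : ZMod 10) : Prop := a = b + 1 ∨ b = a + 1

instance (a b : ZMod 10) : Decidable (adjC a b) := by unfold adjC; infer_instance

def pr (i : Fin 11) : ZMod 10 := (i.1 : ZMod 10)

def emb (a : ZMod 10) : Fin 11 := ⟨a.val, by have := ZMod.val_lt a; omega⟩

lemma L1 : ∀ y z : Fin 11, (y = z ∨ A11 y z) → (pr y = pr z ∨ adjC (pr y) (pr z)) := by decide
lemma L2 : ∀ a : ZMod 10, A11 (emb (a+1)) (emb a) := by decide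
lemma L3 : ∀ y z : Fin 11, (y = z ∨ A11 y z) → pr y = pr z → y = z := by decide
lemma L4 : ∀ y : Fin 11, (y = 10 ∨ A11 y 10) → (y = 1 ∨ A11 y 1) → (y = 9 ∨ A11 y 9) → y = 10 := by decide
lemma L5 : ∀ y : Fin 11, (y = 1 ∨ A11 y 1) → (y = 10 ∨ A11 y 10) → y = 1 ∨ y = 10 := by decide
lemma L6 : ∀ y : Fin 11, (y = 9 ∨ A11 y 9) → (y = 10 ∨ A11 y 10) → pr y = 8 → False := by decide
lemma pr_emb (a : ZMod 10) : pr (emb a) = a := ZMod.natCast_rightInverse a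
lemma emb_pr (i : Fin 11) (hi : i.1 < 10) : emb (pr i) = i := by
  apply Fin.ext
  show (pr i).val = i.1
  rw [pr, ZMod.val_natCast_of_lt hi]


def rk (a : ZMod 10) : ℕ := if a = 1 then 2 else if a = 0 then 1 else 0

lemma rk_step : ∀ a b : ZMod 10, (a=0∨a=1∨a=9) → (b=0∨b=1∨b=9) → (b-a=8∨b-a=9∨b-a=0) →
    rk b ≤ rk a ∧ (rk b = rk a → b = a) := by decide

lemma crigid (k : ZMod 10 → ZMod 10)
    (hcl : ∀ a, k a = a ∨ adjC (k a) a)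
    (hct : ∀ a, k (a+1) = k a ∨ adjC (k (a+1)) (k a)) :
    ∀ a b, k a - a = k b - b := by
  set d : ZMod 10 → ZMod 10 := fun a => k a - a with hd
  have hmem : ∀ a, d a = 0 ∨ d a = 1 ∨ d a = 9 := by
    intro a
    have h' : k a = a ∨ (k a = a + 1 ∨ a = k a + 1) := hcl a
    have hda : d a = k a - a := rfl
    rcases h' with h | h | h
    · left; rw [hda, h, sub_self]
    · right; left; rw [hda, h]; ring
    · right; right; rw [hda]
      have e2 : k a - a = -1 := by linear_combination -h
      rw [e2]; decide
  have hdiff : ∀ a, d (a+1) - d a = 8 ∨ d (a+1) - d a = 9 ∨ d (a+1) - d a = 0 := by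
    intro a
    have e : d (a+1) - d a = (k (a+1) - k a) - 1 := by simp only [hd]; ring
    have h' : k (a+1) = k a ∨ (k (a+1) = k a + 1 ∨ k a = k (a+1) + 1) := hct a
    rcases h' with h | h | h
    · right; left; rw [e, h]
      have e2 : k a - k a - 1 = -1 := by ring
      rw [e2]; decide
    · right; right; rw [e, h]; ring
    · left
      have e2 : k (a+1) - k a - 1 = -2 := by linear_combination -h
      rw [e, e2]; decide
  have hstep : ∀ a, rk (d (a+1)) ≤ rk (d a) ∧ (rk (d (a+1)) = rk (d a) → d (a+1) = d a) :=
    fun a => rk_step (d a) (d (a+1)) (hmem a) (hmem (a+1)) (hdiff a)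
  have key : ∀ a : ZMod 10, ∀ n : ℕ, n ≤ 10 → d (a + n) = d a := by
    intro a
    have cast_succ : ∀ n : ℕ, a + ((n+1 : ℕ) : ZMod 10) = (a + n) + 1 := by
      intro n; push_cast; ring
    set s : ℕ → ℕ := fun n => rk (d (a + n)) with hs
    have mono : ∀ n, s (n+1) ≤ s n := by
      intro n
      show rk (d (a + ((n+1:ℕ) : ZMod 10))) ≤ rk (d (a + n))
      rw [cast_succ n]
      exact (hstep (a + n)).1
    have mono' : ∀ p q, p ≤ q → s q ≤ s p := by
      intro p q hpq
      induction q with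
      | zero =>
        have : p = 0 := by omega
        simp [this]
      | succ q ih =>
        rcases Nat.lt_or_ge p (q+1) with h | h
        · exact le_trans (mono q) (ih (by omega))
        · have : p = q + 1 := by omega
          simp [this]
    have s10 : s 10 = s 0 := by
      show rk (d (a + ((10:ℕ) : ZMod 10))) = rk (d (a + ((0:ℕ) : ZMod 10)))
      have e : ((10:ℕ) : ZMod 10) = ((0:ℕ) : ZMod 10) := by decide
      rw [e]
    have sconst : ∀ n, n ≤ 10 → s n = s 0 := by
      intro n hn
      have h1 : s n ≤ s 0 := mono' 0 n (by omega)
      have h2 : s 10 ≤ s n := mono' n 10 hn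
      omega
    intro n hn
    induction n with
    | zero => norm_num
    | succ n ih =>
      have e1 : s (n+1) = s n := by rw [sconst (n+1) hn, sconst n (by omega)]
      have e2 : rk (d (a + ↑n + 1)) = rk (d (a + ↑n)) := by
        rw [← cast_succ n]; exact e1
      have e3 := (hstep (a + n)).2 e2
      rw [cast_succ n, e3, ih (by omega)]
  have dconst : ∀ a b, d a = d b := by
    intro a b
    have hval : ((a - b).val : ZMod 10) = a - b := ZMod.natCast_rightInverse (a - b)
    have hle : (a - b).val ≤ 10 := by have := ZMod.val_lt (a - b); omega
    have h1 := key b (a - b).val hle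
    rw [hval] at h1
    have e : b + (a - b) = a := by ring
    rw [e] at h1
    exact h1
  intro a b
  have := dconst a b
  simpa [hd] using this


lemma rigid (h : Fin 11 → Fin 11)
    (hcl : ∀ i, h i = i ∨ A11 (h i) i)
    (hct : ∀ i j, A11 i j → h i = h j ∨ A11 (h i) (h j))
    (hfix : ∃ a, h a = a) : ∀ i, h i = i := by
  set k : ZMod 10 → ZMod 10 := fun a => pr (h (emb a)) with hk
  have kcl : ∀ a, k a = a ∨ adjC (k a) a := by
    intro a
    have := L1 (h (emb a)) (emb a) (hcl (emb a))
    rwa [pr_emb] at this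
  have kct : ∀ a, k (a+1) = k a ∨ adjC (k (a+1)) (k a) := by
    intro a
    exact L1 _ _ (hct (emb (a+1)) (emb a) (L2 a))
  have main : ∀ a : Fin 11, a.1 < 10 → h a = a → ∀ i, h i = i := by
    intro a ha hfa
    have dconst := crigid k kcl kct
    have hk0 : k (pr a) = pr a := by
      show pr (h (emb (pr a))) = pr a
      rw [emb_pr a ha, hfa]
    have hall : ∀ b, k b = b := by
      intro b
      have h1 := dconst b (pr a)
      rw [hk0, sub_self] at h1
      exact sub_eq_zero.mp h1
    have hsmall : ∀ i : Fin 11, i.1 < 10 → h i = i := by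
      intro i hi
      apply L3 (h i) i (hcl i)
      have h2 := hall (pr i)
      show pr (h i) = pr i
      calc pr (h i) = pr (h (emb (pr i))) := by rw [emb_pr i hi]
        _ = pr i := h2
    have h1 := hsmall 1 (by decide)
    have h9 := hsmall 9 (by decide)
    intro i
    by_cases hi : i.1 < 10
    · exact hsmall i hi
    · have hi10 : i = 10 := by
        apply Fin.ext
        show i.1 = (10 : Fin 11).1
        have := i.isLt
        have hv : (10 : Fin 11).1 = 10 := rfl
        omega
      subst hi10
      apply L4 (h 10) (hcl 10)
      · have := hct 10 1 (by decide)
        rwa [h1] at this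
      · have := hct 10 9 (by decide)
        rwa [h9] at this
  rcases hfix with ⟨a, hfa⟩
  by_cases ha : a.1 < 10
  · exact main a ha hfa
  · have ha10 : a = 10 := by
      apply Fin.ext
      show a.1 = (10 : Fin 11).1
      have := a.isLt
      have hv : (10 : Fin 11).1 = 10 := rfl
      omega
    subst ha10
    have h5 := L5 (h 1) (hcl 1) (by have := hct 1 10 (by decide); rwa [hfa] at this)
    rcases h5 with h1 | h1
    · exact main 1 (by decide) h1
    · exfalso
      have dconst := crigid k kcl kct
      have e1 : emb (1 : ZMod 10) = (1 : Fin 11) := by decide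
      have k1 : k 1 = 0 := by
        show pr (h (emb 1)) = 0
        rw [e1, h1]
        decide
      have h19 := dconst 9 1
      rw [k1] at h19
      have k9 : k 9 = 8 := by
        have e : k 9 = k 9 - 9 + 9 := by ring
        rw [e, h19]
        decide
      have e9 : emb (9 : ZMod 10) = (9 : Fin 11) := by decide
      have p9 : pr (h (9 : Fin 11)) = 8 := by rw [← e9]; exact k9
      exact L6 (h 9) (hcl 9) (by have := hct 9 10 (by decide); rwa [hfa] at this) p9

section Helpers

lemma xpt_large (n : ℕ) : xpt (n + 10) = (0, 0) := rfl

def eXf (i : Fin 11) : ↥Xset := ⟨xpt i.1, ⟨i.1, rfl⟩⟩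

lemma eXf_inj_aux : ∀ i j : Fin 11, xpt i.1 = xpt j.1 → i = j := by decide

lemma eXf_bij : Function.Bijective eXf := by
  constructor
  · intro i j hij
    exact eXf_inj_aux i j (congrArg Subtype.val hij)
  · rintro ⟨p, n, rfl⟩
    by_cases hn : n < 11
    · exact ⟨⟨n, hn⟩, rfl⟩
    · refine ⟨⟨10, by omega⟩, ?_⟩
      apply Subtype.ext
      show xpt 10 = xpt n
      obtain ⟨m, rfl⟩ : ∃ m, n = m + 10 := ⟨n - 10, by omega⟩
      rfl

noncomputable def eX : Fin 11 ≃ ↥Xset := Equiv.ofBijective eXf eXf_bij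

lemma xptne : ∀ j : Fin 10, xpt (j.1+1) ≠ xpt 0 := by decide

def eYf (i : Fin 10) : ↥Yset :=
  ⟨xpt (i.1+1), ⟨⟨i.1+1, rfl⟩, fun hmem => xptne i (Set.mem_singleton_iff.mp hmem)⟩⟩

lemma eYf_inj_aux : ∀ i j : Fin 10, xpt (i.1+1) = xpt (j.1+1) → i = j := by decide

lemma eYf_surj : Function.Surjective eYf := by
  rintro ⟨p, ⟨n, rfl⟩, hne⟩
  have hne' : xpt n ≠ xpt 0 := fun h => hne (Set.mem_singleton_iff.mpr h)
  by_cases hn : n < 10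
  · have hn0 : n ≠ 0 := by rintro rfl; exact hne' rfl
    refine ⟨⟨n-1, by omega⟩, ?_⟩
    apply Subtype.ext
    show xpt (n-1+1) = xpt n
    congr 1
    omega
  · refine ⟨⟨9, by omega⟩, ?_⟩
    apply Subtype.ext
    show xpt (9+1) = xpt n
    obtain ⟨m, rfl⟩ : ∃ m, n = m + 10 := ⟨n - 10, by omega⟩
    rfl

noncomputable def eY : Fin 10 ≃ ↥Yset :=
  Equiv.ofBijective eYf ⟨fun i j h => eYf_inj_aux i j (congrArg Subtype.val h), eYf_surj⟩

end Helpers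

/-- For any `x ∈ X` and `y ∈ Y`, the pointed digital images
`(X,x)` and `(Y,y)` are not pointed `(c₂,c₂)`-homotopy equivalent. -/
theorem not_pointed_homotopy_equivalent :
    ∀ (x : ↥Xset) (y : ↥Yset),
      ¬ ∃ (f : ↥Xset → ↥Yset) (g : ↥Yset → ↥Xset),
          DigCont (subAdj Xset) (subAdj Yset) f ∧
          DigCont (subAdj Yset) (subAdj Xset) g ∧
          f x = y ∧ g y = x ∧
          PtHomotopic (subAdj Xset) x (g ∘ f) id ∧
          PtHomotopic (subAdj Yset) y (f ∘ g) id := by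
  intro x y
  rintro ⟨f, g, hfc, hgc, hfx, hgy, ⟨m, H, ⟨H0, Hm, Hpath, Hcont⟩, Hpt⟩, -⟩
  have hbase : ∀ t, t ≤ m → H x t = x := by
    intro t ht
    rw [Hpt t ht, H0 x]
    show g (f x) = x
    rw [hfx, hgy]
  have levels : ∀ k, k ≤ m → ∀ p, H p (m - k) = p := by
    intro k
    induction k with
    | zero =>
      intro _ p
      simpa using Hm p
    | succ k ih =>
      intro hk p
      have ihm := ih (by omega)
      set t := m - (k+1) with htdef
      have ht1 : t + 1 = m - k := by omega
      set hh : ↥Xset → ↥Xset := fun q => H q t with hhdef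
      have hclX : ∀ q : ↥Xset, hh q = q ∨ subAdj Xset (hh q) q := by
        intro q
        have h2 := Hpath q t (t+1) (by omega) (by omega) (Or.inl rfl)
        rw [ht1, ihm q] at h2
        exact h2
      have hctX : DigCont (subAdj Xset) (subAdj Xset) hh := Hcont t (by omega)
      have hfixX : hh x = x := hbase t (by omega)
      set h' : Fin 11 → Fin 11 := fun i => eX.symm (hh (eX i)) with h'def
      have hEq : ∀ i, eX (h' i) = hh (eX i) := fun i => eX.apply_symm_apply _
      have hcl' : ∀ i, h' i = i ∨ A11 (h' i) i := by
        intro i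
        rcases hclX (eX i) with hq | hq
        · left
          exact eX.injective (by rw [hEq i, hq])
        · right
          show c2Adj (xpt (h' i).1) (xpt i.1)
          have e1 : xpt (h' i).1 = (hh (eX i)).1 := by rw [← hEq i]; rfl
          rw [e1]
          exact hq
      have hct' : ∀ i j, A11 i j → h' i = h' j ∨ A11 (h' i) (h' j) := by
        intro i j hij
        have hsub : subAdj Xset (eX i) (eX j) := hij
        rcases hctX (eX i) (eX j) hsub with hq | hq
        · left
          exact eX.injective (by rw [hEq i, hEq j, hq])
        · right
          show c2Adj (xpt (h' i).1) (xpt (h' j).1)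
          have e1 : xpt (h' i).1 = (hh (eX i)).1 := by rw [← hEq i]; rfl
          have e2 : xpt (h' j).1 = (hh (eX j)).1 := by rw [← hEq j]; rfl
          rw [e1, e2]
          exact hq
      have hfix' : ∃ a, h' a = a := by
        refine ⟨eX.symm x, ?_⟩
        show eX.symm (hh (eX (eX.symm x))) = eX.symm x
        rw [eX.apply_symm_apply, hfixX]
      have hid := rigid h' hcl' hct' hfix'
      have hp : hh p = p := by
        have h3 := congrArg eX (hid (eX.symm p))
        rw [hEq _, eX.apply_symm_apply] at h3
        exact h3
      exact hp
  have gf_id : ∀ p, g (f p) = p := by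
    intro p
    have h4 := levels m (le_refl m) p
    rw [Nat.sub_self] at h4
    calc g (f p) = H p 0 := (H0 p).symm
      _ = p := h4
  have finj : Function.Injective f := by
    intro p q hpq
    rw [← gf_id p, ← gf_id q, hpq]
  have hinj : Function.Injective (eY.symm ∘ f ∘ eX) :=
    eY.symm.injective.comp (finj.comp eX.injective)
  have hcard := Fintype.card_le_of_injective _ hinj
  rw [Fintype.card_fin, Fintype.card_fin] at hcard
  omega
end

section
/- Let (X,κ) be a digital image, let f : [0,m]_ℤ → X be a loop, and let f̄ : [0,n]_ℤ → X be a trivial extension of f. Then f_∞ and f̄_∞ are EC homotopic holding the endpoints fixed. -/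
/-- `(2,κ)`-continuity for functions on `ℕ* = {0,1,2,…}` with 2-adjacency. -/
def ECCont {X : Type*} (κ : X → X → Prop) (f : ℕ → X) : Prop :=
  ∀ a b, natAdj a b → f a = f b ∨ κ (f a) (f b)

/-- An eventually constant (EC) path in `(X,κ)`. -/
def IsECPath {X : Type*} (κ : X → X → Prop) (f : ℕ → X) : Prop :=
  ECCont κ f ∧ ∃ N, ∀ n, N ≤ n → f n = f N

/-- `N_f`, the least index after which `f` is constant. -/
noncomputable def ecN {X : Type*} (f : ℕ → X) : ℕ :=
  sInf {m | ∀ n, m ≤ n → f n = f m}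

/-- An EC homotopy from `f` to `g` (each stage is an EC path). -/
def IsECHomotopy {X : Type*} (κ : X → X → Prop) (f g : ℕ → X) (k : ℕ)
    (H : ℕ → ℕ → X) : Prop :=
  (∀ n, H n 0 = f n) ∧ (∀ n, H n k = g n) ∧
  (∀ n s t, s ≤ k → t ≤ k → natAdj s t → H n s = H n t ∨ κ (H n s) (H n t)) ∧
  (∀ t, t ≤ k → IsECPath κ (fun n => H n t))

/-- The EC homotopy `H` from `f` to `g` holds the endpoints fixed. -/
def ECHoldsEnds {X : Type*} (f g : ℕ → X) (k : ℕ) (H : ℕ → ℕ → X) : Prop :=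
  f 0 = g 0 ∧ (∀ t, t ≤ k → H 0 t = f 0) ∧
  ∃ c, ∀ n, c ≤ n → f n = g n ∧ ∀ t, t ≤ k → H n t = f n

/-- `f` and `g` are EC homotopic. -/
def ECHomotopic {X : Type*} (κ : X → X → Prop) (f g : ℕ → X) : Prop :=
  ∃ k H, IsECHomotopy κ f g k H

/-- `f` and `g` are EC homotopic holding the endpoints fixed. -/
def ECHomotopicFix {X : Type*} (κ : X → X → Prop) (f g : ℕ → X) : Prop :=
  ∃ k H, IsECHomotopy κ f g k H ∧ ECHoldsEnds f g k H

/-- A finite digital path `f : [0,m]_ℤ → X`, represented by its length `len`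
and its values, frozen (constant) beyond `len`. -/
structure DPath (X : Type*) where
  len : ℕ
  toFun : ℕ → X
  frozen : ∀ n, len ≤ n → toFun n = toFun len

/-- `p_∞ : ℕ* → X`, the eventually constant extension of a finite path. -/
def DPath.inf {X : Type*} (p : DPath X) : ℕ → X := fun n => p.toFun (min n p.len)

/-- `(2,κ)`-continuity of a finite path on its domain `[0,len]_ℤ`. -/
def DPath.IsCont {X : Type*} (κ : X → X → Prop) (p : DPath X) : Prop :=
  ∀ a b, a ≤ p.len → b ≤ p.len → natAdj a b →
    p.toFun a = p.toFun b ∨ κ (p.toFun a) (p.toFun b)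

/-- `f_-`, the restriction of an EC path `f` to `[0, N_f]_ℤ`. -/
noncomputable def ecTrunc {X : Type*} (f : ℕ → X) : DPath X where
  len := ecN f
  toFun := fun n => f (min n (ecN f))
  frozen := by intro n hn; simp [min_eq_right hn]

/-- Concatenation (product) `p * q` of finite paths. -/
def DPath.concat {X : Type*} (p q : DPath X) : DPath X where
  len := p.len + q.len
  toFun := fun t => if t < p.len then p.toFun t else q.toFun (t - p.len)
  frozen := by
    intro n hn
    have h1 : ¬ n < p.len := by omega
    have h2 : ¬ p.len + q.len < p.len := by omega
    simp only [if_neg h1, if_neg h2]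
    rw [q.frozen (n - p.len) (by omega), Nat.add_sub_cancel_left]

/-- A constant (trivial) path. -/
def IsConstPath {X : Type*} (p : DPath X) : Prop := ∀ n, p.toFun n = p.toFun 0

/-- The product `p * l₀ * l₁ * ⋯` of a nonempty family of paths. -/
def concatAll {X : Type*} (p : DPath X) (l : List (DPath X)) : DPath X :=
  l.foldl DPath.concat p

/-- Consecutive paths in the list are composable (endpoints match). -/
def ChainOK {X : Type*} (l : List (DPath X)) : Prop :=
  l.Chain' (fun p q => p.toFun p.len = q.toFun 0)

/-- `TrivExt κ f f'` : the path `f'` is a trivial extension of the path `f`: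
`f = f₁ * ⋯ * f_k`, `f' = F₁ * ⋯ * F_p`, with indices `i₁ < ⋯ < i_k`,
`F_{i_j} = f_j`, and every other `F_i` a constant loop. -/
def TrivExt {X : Type*} (κ : X → X → Prop) (f f' : DPath X) : Prop :=
  ∃ (a : DPath X) (fs : List (DPath X)) (b : DPath X) (Fs : List (DPath X)),
    (∀ r ∈ a :: fs, DPath.IsCont κ r) ∧ (∀ r ∈ b :: Fs, DPath.IsCont κ r) ∧
    ChainOK (a :: fs) ∧ ChainOK (b :: Fs) ∧
    f = concatAll a fs ∧ f' = concatAll b Fs ∧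
    ∃ idx : Fin (a :: fs).length → Fin (b :: Fs).length,
      StrictMono idx ∧
      (∀ j, (b :: Fs).get (idx j) = (a :: fs).get j) ∧
      (∀ i, (∀ j, idx j ≠ i) → IsConstPath ((b :: Fs).get i))

/-- A digital homotopy `H : [0,m]_ℤ × [0,k]_ℤ → X` between paths `F` and `G`. -/
def IsPathHomotopy {X : Type*} (κ : X → X → Prop) (m k : ℕ) (F G : ℕ → X)
    (H : ℕ → ℕ → X) : Prop :=
  (∀ t, t ≤ m → H t 0 = F t) ∧ (∀ t, t ≤ m → H t k = G t) ∧
  (∀ t, t ≤ m → ∀ s₁ s₂, s₁ ≤ k → s₂ ≤ k → natAdj s₁ s₂ →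
    H t s₁ = H t s₂ ∨ κ (H t s₁) (H t s₂)) ∧
  (∀ s, s ≤ k → ∀ t₁ t₂, t₁ ≤ m → t₂ ≤ m → natAdj t₁ t₂ →
    H t₁ s = H t₂ s ∨ κ (H t₁ s) (H t₂ s))

/-- The homotopy `H` between paths `F, G : [0,m]_ℤ → X` holds the endpoints fixed. -/
def PathHoldsEnds {X : Type*} (m k : ℕ) (F G : ℕ → X) (H : ℕ → ℕ → X) : Prop :=
  F 0 = G 0 ∧ F m = G m ∧ ∀ s, s ≤ k → H 0 s = F 0 ∧ H m s = F m

/-- Paths `F, G : [0,m]_ℤ → X` are homotopic. -/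
def PathHomotopic {X : Type*} (κ : X → X → Prop) (m : ℕ) (F G : ℕ → X) : Prop :=
  ∃ k H, IsPathHomotopy κ m k F G H

/-- Paths `F, G : [0,m]_ℤ → X` are homotopic holding the endpoints fixed. -/
def PathHomotopicFix {X : Type*} (κ : X → X → Prop) (m : ℕ) (F G : ℕ → X) : Prop :=
  ∃ k H, IsPathHomotopy κ m k F G H ∧ PathHoldsEnds m k F G H

/-!
A trivial extension `q` of `f` is `f` run with pauses: `q = f ∘ ψ` for a map `ψ : ℕ → ℕ` with
`ψ 0 = 0` that at each step either stays or advances by one, and reaches `f.len` at `q.len`.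
Such a `ψ` satisfies `ψ n ≤ n`, and `H n t = f (min (ψ n + (q.len - t)) n)` deforms
`f = H · 0` into `q = H · q.len`: every stage moves at most one step at a time in `n` and
in `t`, starts at `f 0`, and is frozen at the common endpoint once `n ≥ q.len`.
-/

def IsLazy (ψ : ℕ → ℕ) : Prop := ∀ n, ψ n ≤ ψ (n + 1) ∧ ψ (n + 1) ≤ ψ n + 1

namespace IsLazy

variable {ψ : ℕ → ℕ}

theorem monotone (hψ : IsLazy ψ) : Monotone ψ := monotone_nat_of_le_succ fun n => (hψ n).1

theorem le_self (hψ : IsLazy ψ) (hψ0 : ψ 0 = 0) (n : ℕ) : ψ n ≤ n := by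
  induction n with
  | zero => exact hψ0.le
  | succ n ih => have := (hψ n).2; omega

end IsLazy

theorem ECCont.apply_eq_or_of_le_of_le {X : Type*} {κ : X → X → Prop} {g : ℕ → X}
    (hg : ECCont κ g) {a b : ℕ} (hab : a ≤ b + 1) (hba : b ≤ a + 1) :
    g a = g b ∨ κ (g a) (g b) := by
  rcases eq_or_ne a b with rfl | hne
  · exact .inl rfl
  · exact hg a b (by unfold natAdj; omega)

theorem ecHomotopicFix_comp_of_isLazy {X : Type*} {κ : X → X → Prop} {g : ℕ → X}
    (hg : ECCont κ g) {N : ℕ} (hN : ∀ n, N ≤ n → g n = g N) {ψ : ℕ → ℕ} (hψ : IsLazy ψ)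
    (hψ0 : ψ 0 = 0) {L : ℕ} (hL : N ≤ ψ L) :
    ECHomotopicFix κ g (g ∘ ψ) := by
  have hle := hψ.le_self hψ0
  have hfar : ∀ n, L ≤ n → N ≤ ψ n := fun n hn => hL.trans (hψ.monotone hn)
  have hH : ∀ n t, L ≤ n → g (min (ψ n + (L - t)) n) = g N := fun n t hn =>
    hN _ (le_min (by have := hfar n hn; omega) ((hfar n hn).trans (hle n)))
  have hg_far : ∀ n, L ≤ n → g n = g N := fun n hn => hN n ((hfar n hn).trans (hle n))
  refine ⟨L, fun n t => g (min (ψ n + (L - t)) n), ⟨fun n => ?_, fun n => ?_, ?_, ?_⟩,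
    by simp [hψ0], fun t _ => by simp, L, fun n hn => ⟨?_, fun t _ => ?_⟩⟩
  · rcases le_or_gt n (ψ n + L) with h | h
    · simp [h]
    · exact (hH n 0 (by omega)).trans (hg_far n (by omega)).symm
  · simp [hle n]
  · intro n s t _ _ hst
    unfold natAdj at hst
    exact hg.apply_eq_or_of_le_of_le (by omega) (by omega)
  · intro t _
    refine ⟨fun a b hab => ?_, L, fun n hn => (hH n t hn).trans (hH L t le_rfl).symm⟩
    rcases hab with rfl | rfl
    · have := hψ a
      exact hg.apply_eq_or_of_le_of_le (by omega) (by omega)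
    · have := hψ b
      exact hg.apply_eq_or_of_le_of_le (by omega) (by omega)
  · rw [Function.comp_apply, hg_far n hn, hN _ (hfar n hn)]
  · exact (hH n t hn).trans (hg_far n hn).symm

inductive IsPadding {α : Type*} (P : α → Prop) : List α → List α → Prop
  | nil : IsPadding P [] []
  | cons (a : α) {l L : List α} : IsPadding P l L → IsPadding P (a :: l) (a :: L)
  | insert {c : α} {l L : List α} : P c → IsPadding P l L → IsPadding P l (c :: L)

theorem isPadding_of_strictMono {α : Type*} {P : α → Prop} {l L : List α}
    (idx : Fin l.length → Fin L.length) (hmono : StrictMono idx)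
    (hget : ∀ j, L.get (idx j) = l.get j) (hP : ∀ i, (∀ j, idx j ≠ i) → P (L.get i)) :
    IsPadding P l L := by
  induction L generalizing l with
  | nil =>
    cases l with
    | nil => exact .nil
    | cons a l => exact (idx ⟨0, by simp⟩).elim0
  | cons c L ih =>
    have shift : ∀ {l' : List α} (idx' : Fin l'.length → Fin (c :: L).length)
        (h0 : ∀ j, idx' j ≠ 0), StrictMono idx' → (∀ j, (c :: L).get (idx' j) = l'.get j) →
        (∀ i : Fin L.length, (∀ j, idx' j ≠ i.succ) → P (L.get i)) → IsPadding P l' L := by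
      intro l' idx' h0 hmono' hget' hP'
      refine ih (fun j => (idx' j).pred (h0 j))
        (fun j k hjk => Fin.pred_lt_pred_iff.mpr (hmono' hjk)) (fun j => ?_)
        (fun i hi => hP' i fun j hj => hi j ((Fin.pred_eq_iff_eq_succ _).mpr hj))
      rw [← hget' j]
      conv_rhs => rw [← Fin.succ_pred (idx' j) (h0 j)]
      rfl
    by_cases hhit : ∃ j, idx j = 0
    · obtain ⟨j, hj⟩ := hhit
      cases l with
      | nil => exact j.elim0
      | cons a l =>
        have h00 : idx 0 = 0 := le_antisymm (hj ▸ hmono.monotone (Fin.zero_le j)) (Fin.zero_le _)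
        obtain rfl : c = a := by simpa [h00] using hget 0
        refine .cons c (shift (idx ∘ Fin.succ) (fun k hk => Fin.succ_ne_zero k
          (hmono.injective (hk.trans h00.symm))) (hmono.comp (Fin.strictMono_succ))
          (fun k => hget k.succ) (fun i hi => hP i.succ fun k => ?_))
        cases k using Fin.cases with
        | zero => exact h00 ▸ (Fin.succ_ne_zero i).symm
        | succ k => exact hi k
    · simp only [not_exists] at hhit
      exact .insert (hP 0 hhit) (shift idx hhit hmono hget fun i hi => hP i.succ hi)

namespace DPath

variable {X : Type*}

@[ext]
theorem ext {p q : DPath X} (hlen : p.len = q.len) (hfun : p.toFun = q.toFun) : p = q := by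
  cases p; cases q; cases hlen; cases hfun; rfl

theorem inf_eq_toFun (p : DPath X) : p.inf = p.toFun := by
  funext n
  rcases le_total n p.len with h | h
  · simp [inf, h]
  · simp [inf, h, p.frozen n h]

theorem IsCont.ecCont {κ : X → X → Prop} {p : DPath X} (hp : p.IsCont κ) : ECCont κ p.toFun := by
  intro a b hab
  rw [← p.inf_eq_toFun]
  unfold natAdj at hab
  rcases eq_or_ne (min a p.len) (min b p.len) with h | h
  · exact .inl (congrArg p.toFun h)
  · exact hp _ _ (min_le_right _ _) (min_le_right _ _) (by unfold natAdj; omega)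

def const (x : X) : DPath X := ⟨0, fun _ => x, fun _ _ => rfl⟩

theorem const_concat (x : X) (p : DPath X) : (const x).concat p = p := by
  ext n <;> simp [const, concat]

theorem concat_const (p : DPath X) : p.concat (const (p.toFun p.len)) = p := by
  ext n
  · simp [const, concat]
  · simp only [concat, const]
    split_ifs with h
    · rfl
    · exact (p.frozen n (not_lt.mp h)).symm

theorem toFun_len_concat (p q : DPath X) :
    (p.concat q).toFun (p.concat q).len = q.toFun q.len := by
  simp [concat]

def Composable (p q : DPath X) : Prop := p.toFun p.len = q.toFun 0

theorem isChain_concat {p q : DPath X} {l : List (DPath X)} (h : (q :: l).IsChain Composable) :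
    (p.concat q :: l).IsChain Composable := by
  cases l with
  | nil => exact List.isChain_singleton _
  | cons r l =>
    rw [List.isChain_cons_cons] at h ⊢
    exact ⟨(toFun_len_concat p q).trans h.1, h.2⟩

def IsReparam (p q : DPath X) : Prop :=
  ∃ ψ : ℕ → ℕ, ψ 0 = 0 ∧ IsLazy ψ ∧ (∀ n, q.len ≤ n → ψ n = p.len) ∧ q.toFun = p.toFun ∘ ψ

namespace IsReparam

theorem refl (p : DPath X) : IsReparam p p :=
  ⟨fun n => min n p.len, by simp, fun n => by dsimp only; omega, fun n hn => by simp [hn],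
    (inf_eq_toFun p).symm⟩

theorem toFun_len_eq {p q : DPath X} (h : IsReparam p q) : p.toFun p.len = q.toFun q.len := by
  obtain ⟨ψ, -, -, hlen, hq⟩ := h
  rw [hq, Function.comp_apply, hlen _ le_rfl]

theorem concat {p q p' q' : DPath X} (h : IsReparam p q) (h' : IsReparam p' q')
    (hp : Composable p p') : IsReparam (p.concat p') (q.concat q') := by
  obtain ⟨ψ, hψ0, hψ, hlen, hq⟩ := h
  obtain ⟨ψ', hψ0', hψ', hlen', hq'⟩ := h'
  have hψp : ∀ n, ψ n ≤ p.len := fun n => by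
    rcases le_total n q.len with hn | hn
    · exact (hψ.monotone hn).trans (hlen _ le_rfl).le
    · exact (hlen n hn).le
  refine ⟨fun n => if n < q.len then ψ n else p.len + ψ' (n - q.len), ?_, fun n => ?_,
    fun n hn => ?_, funext fun n => ?_⟩
  · dsimp only
    split_ifs with h
    · exact hψ0
    · rw [Nat.zero_sub, hψ0', add_zero, ← hlen 0 (by omega), hψ0]
  · dsimp only
    rcases lt_trichotomy (n + 1) q.len with h | h | h
    · rw [if_pos h, if_pos (by omega)]
      exact hψ n
    · rw [if_pos (by omega), if_neg (by omega), h, Nat.sub_self, hψ0', add_zero,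
        ← hlen q.len le_rfl, ← h]
      exact hψ n
    · rw [if_neg (by omega), if_neg (by omega), show n + 1 - q.len = n - q.len + 1 by omega]
      have := hψ' (n - q.len)
      omega
  · simp only [DPath.concat] at hn ⊢
    rw [if_neg (by omega), hlen' _ (by omega)]
  · simp only [DPath.concat, Function.comp_apply, hq, hq']
    split_ifs with h₁ h₂ h₂
    · rfl
    · rw [show ψ n = p.len by have := hψp n; omega, Nat.sub_self, ← hp]
    · omega
    · rw [Nat.add_sub_cancel_left]

end IsReparam

theorem isReparam_const {c : DPath X} (hc : IsConstPath c) : IsReparam (const (c.toFun 0)) c :=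
  ⟨fun _ => 0, rfl, fun _ => by simp, fun _ _ => rfl, funext hc⟩

theorem _root_.IsPadding.isReparam_foldl {l L : List (DPath X)} (h : IsPadding IsConstPath l L) :
    ∀ {p q : DPath X}, IsReparam p q → (p :: l).IsChain Composable →
      (q :: L).IsChain Composable → IsReparam (l.foldl concat p) (L.foldl concat q) := by
  induction h with
  | nil => exact fun hpq _ _ => hpq
  | cons r _ ih =>
    intro p q hpq hl hL
    rw [List.isChain_cons_cons] at hl hL
    exact ih (hpq.concat (.refl r) hl.1) (isChain_concat hl.2) (isChain_concat hL.2)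
  | @insert c _ _ hc _ ih =>
    intro p q hpq hl hL
    rw [List.isChain_cons_cons] at hL
    have hcp : c.toFun 0 = p.toFun p.len := hL.1.symm.trans hpq.toFun_len_eq.symm
    have := hpq.concat (isReparam_const hc) hcp.symm
    rw [hcp, concat_const] at this
    exact ih this hl (isChain_concat hL.2)

theorem _root_.IsPadding.toFun_zero_eq {a b : DPath X} {l L : List (DPath X)}
    (h : IsPadding IsConstPath (a :: l) (b :: L)) (hL : (b :: L).IsChain Composable) :
    b.toFun 0 = a.toFun 0 := by
  induction L generalizing b with
  | nil =>
    cases h with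
    | cons => rfl
    | insert _ h => nomatch h
  | cons b' L ih =>
    cases h with
    | cons => rfl
    | insert hb h =>
      rw [List.isChain_cons_cons] at hL
      exact (hb b.len).symm.trans (hL.1.trans (ih h hL.2))

theorem _root_.TrivExt.isReparam {κ : X → X → Prop} {f q : DPath X} (h : TrivExt κ f q) :
    IsReparam f q := by
  obtain ⟨a, fs, b, Fs, -, -, hfs, hFs, rfl, rfl, idx, hmono, hget, hconst⟩ := h
  have hpad : IsPadding IsConstPath (a :: fs) (b :: Fs) :=
    isPadding_of_strictMono idx hmono hget hconst
  -- Prepending the zero-length path at `a 0` puts the heads `a`, `b` on a par with the other pieces.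
  have := hpad.isReparam_foldl (.refl (const (a.toFun 0))) (hfs.cons_cons rfl)
    (hFs.cons_cons (hpad.toFun_zero_eq hFs).symm)
  simpa only [concatAll, List.foldl_cons, const_concat] using this

end DPath

theorem trivial_extension_inf_ec_homotopic_general {X : Type*} (κ : X → X → Prop)
    (f q : DPath X) (hf : f.IsCont κ)
    (hext : TrivExt κ f q) :
    ECHomotopicFix κ f.inf q.inf := by
  obtain ⟨ψ, hψ0, hψ, hlen, hq⟩ := hext.isReparam
  rw [f.inf_eq_toFun, q.inf_eq_toFun, hq]
  exact ecHomotopicFix_comp_of_isLazy hf.ecCont f.frozen hψ hψ0 (hlen _ le_rfl).ge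

/-- If `q` is a trivial extension of a loop `f`, then `f_∞` and
`q_∞` are EC homotopic holding the endpoints fixed. -/
theorem trivial_extension_inf_ec_homotopic {X : Type*} (κ : X → X → Prop)
    (hκ : Symmetric κ) (f q : DPath X) (hf : f.IsCont κ)
    (hloop : f.toFun 0 = f.toFun f.len)
    (hext : TrivExt κ f q) :
    ECHomotopicFix κ f.inf q.inf :=
  trivial_extension_inf_ec_homotopic_general κ f q hf hext
end
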